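/- Let Λ ∈ R^{K×K} and Σ ∈ R^{K×K} be positive definite, μ ∈ R^K, τ, ν > 0, m ∈ R^{d} (d = D − K), a ∈ R^K, w⊥ ∈ R^D with ‖w⊥‖ the Euclidean norm. Define D_PSC = SKL(N(0,Λ), N(μ,Σ)) + SKL(N(0,τI_d), N(m,νI_d)). Then |a^T μ + w⊥^T μ⊥| ≤ √(2 D_PSC) · √(a^T Λ a + τ‖w⊥‖²), whenever ‖μ⊥‖ = ‖m‖ (μ⊥ is the ambient residual mean with coordinates m). -/

import Mathlib

/-!
In the closed form of `SKL(N(m₁, C₁), N(m₂, C₂))` the trace part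
`tr(C₂⁻¹C₁) + tr(C₁⁻¹C₂) - 2K = tr(C₁⁻¹ (C₂ - C₁) C₂⁻¹ (C₂ - C₁))` is nonnegative, so the
divergence is at least `(m₂ - m₁)ᵀC₁⁻¹(m₂ - m₁) / 2`; hence `μᵀΛ⁻¹μ + ‖m‖²/τ ≤ 2 D_PSC`.
Cauchy–Schwarz in the `Λ`-metric gives `(aᵀμ)² ≤ aᵀΛa · μᵀΛ⁻¹μ`, ordinary Cauchy–Schwarz and
`‖μ⊥‖ = ‖m‖` give `(w⊥ᵀμ⊥)² ≤ τ‖w⊥‖² · ‖m‖²/τ`, and Cauchy–Schwarz in `ℝ²` combines the two.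
-/

open Matrix

/-- KL divergence between the `K`-dimensional Gaussians `N(m₁, C₁)` and `N(m₂, C₂)`
(positive definite covariances), via the standard closed form
`D_KL = (1/2)[tr(C₂⁻¹C₁) + (m₂-m₁)ᵀC₂⁻¹(m₂-m₁) - K + log(det C₂ / det C₁)]`. -/
noncomputable def klGauss {K : ℕ} (m₁ : Fin K → ℝ) (C₁ : Matrix (Fin K) (Fin K) ℝ)
    (m₂ : Fin K → ℝ) (C₂ : Matrix (Fin K) (Fin K) ℝ) : ℝ :=
  (1 / 2) * ((C₂⁻¹ * C₁).trace + (m₂ - m₁) ⬝ᵥ C₂⁻¹.mulVec (m₂ - m₁) - K +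
    Real.log (C₂.det / C₁.det))

/-- Symmetrized KL divergence between Gaussians. -/
noncomputable def sklGauss {K : ℕ} (m₁ : Fin K → ℝ) (C₁ : Matrix (Fin K) (Fin K) ℝ)
    (m₂ : Fin K → ℝ) (C₂ : Matrix (Fin K) (Fin K) ℝ) : ℝ :=
  klGauss m₁ C₁ m₂ C₂ + klGauss m₂ C₂ m₁ C₁

open scoped MatrixOrder

namespace Matrix

variable {n : Type*} [Fintype n]

lemma PosSemidef.dotProduct_mulVec_self_nonneg {M : Matrix n n ℝ} (hM : M.PosSemidef)
    (v : n → ℝ) : 0 ≤ v ⬝ᵥ M *ᵥ v := by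
  simpa only [star_trivial] using hM.dotProduct_mulVec_nonneg v

lemma dotProduct_self_nonneg (v : n → ℝ) : 0 ≤ v ⬝ᵥ v := by
  simpa only [star_trivial] using dotProduct_star_self_nonneg v

lemma PosSemidef.trace_mul_nonneg [DecidableEq n] {A B : Matrix n n ℝ} (hA : A.PosSemidef)
    (hB : B.PosSemidef) : 0 ≤ (A * B).trace := by
  have hsqrt : CFC.sqrt A * CFC.sqrt A = A := CFC.sqrt_mul_sqrt_self A hA.nonneg
  have hherm : (CFC.sqrt A)ᴴ = CFC.sqrt A := (CFC.sqrt_nonneg A).posSemidef.isHermitian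
  calc 0 ≤ ((CFC.sqrt A)ᴴ * B * CFC.sqrt A).trace :=
        (hB.conjTranspose_mul_mul_same _).trace_nonneg
    _ = (A * B).trace := by rw [hherm, trace_mul_comm, ← Matrix.mul_assoc, hsqrt]

lemma PosDef.two_mul_card_le_trace_inv_mul_add_trace_inv_mul [DecidableEq n]
    {C₁ C₂ : Matrix n n ℝ} (h₁ : C₁.PosDef) (h₂ : C₂.PosDef) :
    2 * (Fintype.card n : ℝ) ≤ (C₂⁻¹ * C₁).trace + (C₁⁻¹ * C₂).trace := by
  have hpsd : ((C₂ - C₁) * C₂⁻¹ * (C₂ - C₁)).PosSemidef := by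
    simpa only [(h₂.isHermitian.sub h₁.isHermitian).eq] using
      h₂.inv.posSemidef.conjTranspose_mul_mul_same (C₂ - C₁)
  have hexpand :
      C₁⁻¹ * ((C₂ - C₁) * C₂⁻¹ * (C₂ - C₁)) = C₁⁻¹ * C₂ - 2 • 1 + C₂⁻¹ * C₁ := by
    have hC₁ : C₁⁻¹ * C₁ = 1 := nonsing_inv_mul C₁ h₁.det_pos.ne'.isUnit
    have hC₂ : C₂ * C₂⁻¹ = 1 := mul_nonsing_inv C₂ h₂.det_pos.ne'.isUnit
    have hC₂' : C₂⁻¹ * C₂ = 1 := nonsing_inv_mul C₂ h₂.det_pos.ne'.isUnit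
    simp only [Matrix.sub_mul, Matrix.mul_sub, ← Matrix.mul_assoc, hC₂, hC₂', hC₁,
      Matrix.one_mul]
    rw [two_smul]
    abel
  have htrace := h₁.inv.posSemidef.trace_mul_nonneg hpsd
  rw [hexpand, trace_add, trace_sub, trace_smul, trace_one, nsmul_eq_mul] at htrace
  push_cast at htrace
  linarith

lemma PosSemidef.sq_dotProduct_mulVec_le {M : Matrix n n ℝ} (hM : M.PosSemidef)
    (u v : n → ℝ) : (u ⬝ᵥ M *ᵥ v) ^ 2 ≤ (u ⬝ᵥ M *ᵥ u) * (v ⬝ᵥ M *ᵥ v) := by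
  have hsymm : v ⬝ᵥ M *ᵥ u = u ⬝ᵥ M *ᵥ v := by
    rw [dotProduct_mulVec, ← mulVec_transpose, dotProduct_comm,
      ← conjTranspose_eq_transpose_of_trivial, hM.isHermitian.eq]
  have hquad : ∀ t : ℝ,
      0 ≤ (v ⬝ᵥ M *ᵥ v) * (t * t) + 2 * (u ⬝ᵥ M *ᵥ v) * t + u ⬝ᵥ M *ᵥ u := fun t => by
    have := hM.dotProduct_mulVec_self_nonneg (u + t • v)
    simp only [mulVec_add, mulVec_smul, add_dotProduct, dotProduct_add, smul_dotProduct,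
      dotProduct_smul, hsymm, smul_eq_mul] at this
    linarith
  have hdiscrim := discrim_le_zero hquad
  rw [discrim] at hdiscrim
  nlinarith

lemma PosDef.sq_dotProduct_le [DecidableEq n] {Λ : Matrix n n ℝ} (hΛ : Λ.PosDef)
    (a μ : n → ℝ) : (a ⬝ᵥ μ) ^ 2 ≤ (a ⬝ᵥ Λ *ᵥ a) * (μ ⬝ᵥ Λ⁻¹ *ᵥ μ) := by
  have := hΛ.posSemidef.sq_dotProduct_mulVec_le a (Λ⁻¹ *ᵥ μ)
  rwa [mulVec_mulVec, mul_nonsing_inv Λ hΛ.det_pos.ne'.isUnit, one_mulVec,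
    dotProduct_comm (Λ⁻¹ *ᵥ μ)] at this

lemma sq_dotProduct_le [DecidableEq n] (u v : n → ℝ) :
    (u ⬝ᵥ v) ^ 2 ≤ (u ⬝ᵥ u) * (v ⬝ᵥ v) := by
  simpa only [one_mulVec] using PosSemidef.one.sq_dotProduct_mulVec_le u v

lemma dotProduct_smul_one_inv_mulVec [DecidableEq n] (c : ℝ) (v : n → ℝ) :
    v ⬝ᵥ (c • (1 : Matrix n n ℝ))⁻¹ *ᵥ v = c⁻¹ * (v ⬝ᵥ v) := by
  rcases eq_or_ne c 0 with rfl | hc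
  · simp
  · rw [inv_eq_right_inv (B := c⁻¹ • 1) (by simp [hc]), smul_mulVec, one_mulVec,
      dotProduct_smul, smul_eq_mul]

end Matrix

lemma sklGauss_eq {K : ℕ} (m₁ : Fin K → ℝ) (C₁ : Matrix (Fin K) (Fin K) ℝ)
    (m₂ : Fin K → ℝ) (C₂ : Matrix (Fin K) (Fin K) ℝ) :
    sklGauss m₁ C₁ m₂ C₂ = (1 / 2) * ((C₂⁻¹ * C₁).trace + (C₁⁻¹ * C₂).trace - 2 * K) +
      (1 / 2) * ((m₂ - m₁) ⬝ᵥ C₂⁻¹ *ᵥ (m₂ - m₁) + (m₂ - m₁) ⬝ᵥ C₁⁻¹ *ᵥ (m₂ - m₁)) := by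
  have hlog : Real.log (C₁.det / C₂.det) = -Real.log (C₂.det / C₁.det) := by
    rw [← inv_div, Real.log_inv]
  simp only [sklGauss, klGauss, hlog, ← neg_sub m₂ m₁, mulVec_neg, dotProduct_neg,
    neg_dotProduct, neg_neg]
  ring

lemma half_dotProduct_inv_mulVec_le_sklGauss {K : ℕ} {C₁ C₂ : Matrix (Fin K) (Fin K) ℝ}
    (h₁ : C₁.PosDef) (h₂ : C₂.PosDef) (m₁ m₂ : Fin K → ℝ) :
    (1 / 2) * ((m₂ - m₁) ⬝ᵥ C₁⁻¹ *ᵥ (m₂ - m₁)) ≤ sklGauss m₁ C₁ m₂ C₂ := by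
  have htrace := h₁.two_mul_card_le_trace_inv_mul_add_trace_inv_mul h₂
  have hquad := h₂.inv.posSemidef.dotProduct_mulVec_self_nonneg (m₂ - m₁)
  rw [Fintype.card_fin] at htrace
  rw [sklGauss_eq]
  linarith

lemma add_sq_le_mul_of_sq_le {u v p q r s : ℝ} (hp : 0 ≤ p) (hq : 0 ≤ q) (hr : 0 ≤ r)
    (hs : 0 ≤ s) (hu : u ^ 2 ≤ p * r) (hv : v ^ 2 ≤ q * s) :
    (u + v) ^ 2 ≤ (p + q) * (r + s) := by
  have hcross : (2 * u * v) ^ 2 ≤ (p * s + q * r) ^ 2 := by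
    nlinarith [sq_nonneg (p * s - q * r), mul_le_mul hu hv (sq_nonneg v) (by positivity)]
  nlinarith [abs_le_of_sq_le_sq' hcross (by positivity)]

theorem stmt16_general {K D d : ℕ}
    (Λ S : Matrix (Fin K) (Fin K) ℝ) (hΛ : Λ.PosDef) (hS : S.PosDef)
    (μ : Fin K → ℝ) (τ ν : ℝ) (hτ : 0 < τ) (hν : 0 < ν)
    (m : Fin d → ℝ) (a : Fin K → ℝ) (wperp μperp : Fin D → ℝ)
    (hnorm : μperp ⬝ᵥ μperp = m ⬝ᵥ m)
    (DPSC : ℝ)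
    (hDPSC : DPSC = sklGauss 0 Λ μ S +
      sklGauss 0 (τ • (1 : Matrix (Fin d) (Fin d) ℝ)) m
        (ν • (1 : Matrix (Fin d) (Fin d) ℝ))) :
    |a ⬝ᵥ μ + wperp ⬝ᵥ μperp| ≤
      Real.sqrt (2 * DPSC) * Real.sqrt (a ⬝ᵥ Λ.mulVec a + τ * (wperp ⬝ᵥ wperp)) := by
  have hPSC : μ ⬝ᵥ Λ⁻¹ *ᵥ μ + τ⁻¹ * (m ⬝ᵥ m) ≤ 2 * DPSC := by
    have hmean := half_dotProduct_inv_mulVec_le_sklGauss hΛ hS 0 μ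
    have hresid := half_dotProduct_inv_mulVec_le_sklGauss
      (PosDef.one.smul hτ) (PosDef.one.smul hν) 0 m
    rw [sub_zero] at hmean hresid
    rw [dotProduct_smul_one_inv_mulVec] at hresid
    linarith
  have hperp : (wperp ⬝ᵥ μperp) ^ 2 ≤ τ * (wperp ⬝ᵥ wperp) * (τ⁻¹ * (m ⬝ᵥ m)) :=
    calc _ ≤ (wperp ⬝ᵥ wperp) * (μperp ⬝ᵥ μperp) := sq_dotProduct_le wperp μperp
      _ = _ := by rw [hnorm]; field_simp
  have hA := hΛ.posSemidef.dotProduct_mulVec_self_nonneg a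
  have hB : 0 ≤ τ * (wperp ⬝ᵥ wperp) := mul_nonneg hτ.le (dotProduct_self_nonneg wperp)
  have hsq := add_sq_le_mul_of_sq_le hA hB (hΛ.inv.posSemidef.dotProduct_mulVec_self_nonneg μ)
    (mul_nonneg (inv_nonneg.mpr hτ.le) (dotProduct_self_nonneg m)) (hΛ.sq_dotProduct_le a μ) hperp
  rw [mul_comm, ← Real.sqrt_mul (add_nonneg hA hB)]
  exact Real.abs_le_sqrt (hsq.trans (mul_le_mul_of_nonneg_left hPSC (add_nonneg hA hB)))

/-- PSC controls predictive mean drift.  With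
`D_PSC = SKL(N(0,Λ), N(μ,Σ)) + SKL(N(0,τI_d), N(m,νI_d))` and `‖μ⊥‖ = ‖m‖`,
`|aᵀμ + w⊥ᵀμ⊥| ≤ √(2 D_PSC) · √(aᵀΛa + τ‖w⊥‖²)`. -/
theorem stmt16 {K D d : ℕ} (hd : d = D - K)
    (Λ S : Matrix (Fin K) (Fin K) ℝ) (hΛ : Λ.PosDef) (hS : S.PosDef)
    (μ : Fin K → ℝ) (τ ν : ℝ) (hτ : 0 < τ) (hν : 0 < ν)
    (m : Fin d → ℝ) (a : Fin K → ℝ) (wperp μperp : Fin D → ℝ)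
    (hnorm : μperp ⬝ᵥ μperp = m ⬝ᵥ m)
    (DPSC : ℝ)
    (hDPSC : DPSC = sklGauss 0 Λ μ S +
      sklGauss 0 (τ • (1 : Matrix (Fin d) (Fin d) ℝ)) m
        (ν • (1 : Matrix (Fin d) (Fin d) ℝ))) :
    |a ⬝ᵥ μ + wperp ⬝ᵥ μperp| ≤
      Real.sqrt (2 * DPSC) * Real.sqrt (a ⬝ᵥ Λ.mulVec a + τ * (wperp ⬝ᵥ wperp)) :=
  stmt16_general Λ S hΛ hS μ τ ν hτ hν m a wperp μperp hnorm DPSC hDPSC
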